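/- Let R > 0 and define θ(r,ε) = 2 arctan(r) + (r(1−r²)/(1+r²)²) ε for r > 0. Let A(r,ε) = R² sin²(θ(r,ε)) / r² and B(r,ε) = R² (1 + ε sin²(θ(r,ε))) (∂θ/∂r (r,ε))² be the angular and radial metric coefficients of the ellipsoid line element ds² = R² sin²θ dφ² + R²(1+ε sin²θ) dθ² in the coordinates (r,ψ) with φ = ψ. Then for every r > 0: A(r,0) = B(r,0) = 4R²/(1+r²)², and the ε-derivatives at ε = 0 agree: ∂A/∂ε(r,0) = ∂B/∂ε(r,0). Hence the coordinate change is conformal to first order in ε: A(r,ε) − B(r,ε) = O(ε²) for each fixed r. -/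

import Mathlib

/-!
At `ε = 0` the map `r ↦ 2 arctan r` is inverse stereographic projection, which is conformal, so
`A(r,0) = B(r,0) = 4R²/(1+r²)²`. Differentiating in `ε` gives
`∂A/∂ε(r,0) = ∂B/∂ε(r,0) = 4R²(1-r²)²/(1+r²)⁴`: the correction `f₁` is chosen precisely so that
the `ε sin²θ` stretching of the radial coefficient is compensated. Both coefficients are real
analytic in `ε`, and an analytic function that vanishes together with its derivative at a point
is `O` of the squared distance to that point.
-/

open Real Asymptotics

/-- The perturbed coordinate change `θ(r,ε) = 2 arctan r + (r(1−r²)/(1+r²)²) ε`. -/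
noncomputable def θf (r ε : ℝ) : ℝ :=
  2 * Real.arctan r + (r * (1 - r ^ 2) / (1 + r ^ 2) ^ 2) * ε

/-- Angular metric coefficient `A(r,ε) = R² sin²(θ(r,ε))/r²` of the ellipsoid line
element `ds² = R² sin²θ dφ² + R²(1+ε sin²θ) dθ²` in the coordinates `(r,ψ)`. -/
noncomputable def Acoef (R r ε : ℝ) : ℝ :=
  R ^ 2 * Real.sin (θf r ε) ^ 2 / r ^ 2

/-- Radial metric coefficient `B(r,ε) = R²(1+ε sin²(θ(r,ε)))(∂θ/∂r)²`. -/
noncomputable def Bcoef (R r ε : ℝ) : ℝ :=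
  R ^ 2 * (1 + ε * Real.sin (θf r ε) ^ 2) * (deriv (fun s => θf s ε) r) ^ 2

open Filter Topology

theorem AnalyticAt.isBigO_sq_of_eq_zero_of_deriv_eq_zero {𝕜 E : Type*}
    [NontriviallyNormedField 𝕜] [NormedAddCommGroup E] [NormedSpace 𝕜 E] {f : 𝕜 → E} {x : 𝕜} (hf : AnalyticAt 𝕜 f x)
    (h₀ : f x = 0) (h₁ : deriv f x = 0) : f =O[𝓝 x] fun y => (y - x) ^ 2 := by
  obtain ⟨p, hp⟩ := hf
  have hc₀ : p.coeff 0 = 0 := by simpa [h₀] using hp.coeff_zero 1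
  have hc₁ : p.coeff 1 = 0 := h₁ ▸ hp.deriv.symm
  have hshift : (fun y => f (x + y)) =O[𝓝 0] fun y => ‖y‖ ^ 2 := by
    simpa [FormalMultilinearSeries.partialSum, Finset.sum_range_succ, hc₀, hc₁]
      using hp.isBigO_sub_partialSum_pow 2
  have hsub : Tendsto (· - x) (𝓝 x) (𝓝 0) := by
    simpa using (continuous_sub_right x).tendsto x
  have hcomp := hshift.comp_tendsto hsub
  simp only [Function.comp_def, add_sub_cancel, ← norm_pow] at hcomp
  exact hcomp.of_norm_right

theorem sin_two_mul_arctan (r : ℝ) : sin (2 * arctan r) = 2 * r / (1 + r ^ 2) := by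
  have hs : √(1 + r ^ 2) ^ 2 = 1 + r ^ 2 := sq_sqrt (by positivity)
  rw [sin_two_mul, sin_arctan, cos_arctan]
  field_simp
  rw [hs]

theorem cos_two_mul_arctan (r : ℝ) : cos (2 * arctan r) = (1 - r ^ 2) / (1 + r ^ 2) := by
  have hs : √(1 + r ^ 2) ^ 2 = 1 + r ^ 2 := sq_sqrt (by positivity)
  rw [cos_two_mul, cos_arctan]
  field_simp
  rw [hs]
  ring

theorem θf_zero (r : ℝ) : θf r 0 = 2 * arctan r := by simp [θf]

theorem hasDerivAt_θf (r ε : ℝ) :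
    HasDerivAt (θf r) (r * (1 - r ^ 2) / (1 + r ^ 2) ^ 2) ε := by
  have h := ((hasDerivAt_id' ε).const_mul (r * (1 - r ^ 2) / (1 + r ^ 2) ^ 2)).const_add
    (2 * arctan r)
  rwa [mul_one] at h

theorem hasDerivAt_θf_radius (r ε : ℝ) :
    HasDerivAt (fun s => θf s ε)
      (2 / (1 + r ^ 2) + ε * ((1 - 6 * r ^ 2 + r ^ 4) / (1 + r ^ 2) ^ 3)) r := by
  have hnum : HasDerivAt (fun s : ℝ => s * (1 - s ^ 2)) (1 * (1 - r ^ 2) + r * -(2 * r)) r :=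
    (hasDerivAt_id r).mul (by simpa using (hasDerivAt_pow 2 r).const_sub 1)
  have hden : HasDerivAt (fun s : ℝ => (1 + s ^ 2) ^ 2) (2 * (1 + r ^ 2) * (2 * r)) r := by
    simpa using ((hasDerivAt_pow 2 r).const_add 1).fun_pow 2
  refine (((hasDerivAt_arctan r).const_mul 2).add
    ((hnum.div hden (by positivity)).mul_const ε)).congr_deriv ?_
  field_simp
  ring

theorem Bcoef_eq (R r ε : ℝ) :
    Bcoef R r ε = R ^ 2 * (1 + ε * sin (θf r ε) ^ 2) *
      (2 / (1 + r ^ 2) + ε * ((1 - 6 * r ^ 2 + r ^ 4) / (1 + r ^ 2) ^ 3)) ^ 2 := by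
  rw [Bcoef, (hasDerivAt_θf_radius r ε).deriv]

theorem Acoef_zero (R : ℝ) {r : ℝ} (hr : r ≠ 0) : Acoef R r 0 = 4 * R ^ 2 / (1 + r ^ 2) ^ 2 := by
  rw [Acoef, θf_zero, sin_two_mul_arctan]
  field_simp
  ring

theorem Bcoef_zero (R r : ℝ) : Bcoef R r 0 = 4 * R ^ 2 / (1 + r ^ 2) ^ 2 := by
  rw [Bcoef_eq]
  field_simp
  ring

theorem hasDerivAt_Acoef_zero (R : ℝ) {r : ℝ} (hr : r ≠ 0) :
    HasDerivAt (Acoef R r) (4 * R ^ 2 * (1 - r ^ 2) ^ 2 / (1 + r ^ 2) ^ 4) 0 := by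
  refine ((((hasDerivAt_θf r 0).sin).fun_pow 2).const_mul (R ^ 2)).div_const (r ^ 2)
    |>.congr_deriv ?_
  norm_num [θf_zero, sin_two_mul_arctan, cos_two_mul_arctan]
  field_simp
  ring

theorem hasDerivAt_Bcoef_zero (R r : ℝ) :
    HasDerivAt (Bcoef R r) (4 * R ^ 2 * (1 - r ^ 2) ^ 2 / (1 + r ^ 2) ^ 4) 0 := by
  have hsin := ((hasDerivAt_θf r 0).sin).fun_pow 2
  have hlin := ((hasDerivAt_id' (0 : ℝ)).mul_const
    ((1 - 6 * r ^ 2 + r ^ 4) / (1 + r ^ 2) ^ 3)).const_add (2 / (1 + r ^ 2))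
  rw [show Bcoef R r = _ from funext (Bcoef_eq R r)]
  refine ((((hasDerivAt_id' (0 : ℝ)).mul hsin).const_add 1).const_mul (R ^ 2)).mul
    (hlin.fun_pow 2) |>.congr_deriv ?_
  norm_num [θf_zero, sin_two_mul_arctan]
  field_simp
  ring

theorem analyticAt_Acoef (R r ε : ℝ) : AnalyticAt ℝ (Acoef R r) ε := by
  unfold Acoef θf
  fun_prop

theorem analyticAt_Bcoef (R r ε : ℝ) : AnalyticAt ℝ (Bcoef R r) ε := by
  rw [show Bcoef R r = _ from funext (Bcoef_eq R r)]
  unfold θf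
  fun_prop

theorem first_order_conformality_general
    (R : ℝ) (r : ℝ) (hr : 0 < r) :
    Acoef R r 0 = 4 * R ^ 2 / (1 + r ^ 2) ^ 2 ∧
    Bcoef R r 0 = 4 * R ^ 2 / (1 + r ^ 2) ^ 2 ∧
    deriv (fun ε => Acoef R r ε) 0 = deriv (fun ε => Bcoef R r ε) 0 ∧
    (fun ε => Acoef R r ε - Bcoef R r ε) =O[nhds 0] fun ε => ε ^ 2 := by
  have hA' := hasDerivAt_Acoef_zero R hr.ne'
  have hB' := hasDerivAt_Bcoef_zero R r
  refine ⟨Acoef_zero R hr.ne', Bcoef_zero R r, hA'.deriv.trans hB'.deriv.symm, ?_⟩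
  have hO := ((analyticAt_Acoef R r 0).sub (analyticAt_Bcoef R r 0))
    |>.isBigO_sq_of_eq_zero_of_deriv_eq_zero
      (by simp [Acoef_zero R hr.ne', Bcoef_zero R r]) (by simpa using (hA'.sub hB').deriv)
  exact hO.congr_right (by simp)

/-- For every `r > 0`: `A(r,0) = B(r,0) = 4R²/(1+r²)²`, the
`ε`-derivatives at `ε = 0` agree, and hence the coordinate change is conformal to first
order in `ε`: `A(r,ε) − B(r,ε) = O(ε²)` as `ε → 0` for each fixed `r`. -/
theorem first_order_conformality
    (R : ℝ) (hR : 0 < R) (r : ℝ) (hr : 0 < r) :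
    Acoef R r 0 = 4 * R ^ 2 / (1 + r ^ 2) ^ 2 ∧
    Bcoef R r 0 = 4 * R ^ 2 / (1 + r ^ 2) ^ 2 ∧
    deriv (fun ε => Acoef R r ε) 0 = deriv (fun ε => Bcoef R r ε) 0 ∧
    (fun ε => Acoef R r ε - Bcoef R r ε) =O[nhds 0] fun ε => ε ^ 2 :=
  first_order_conformality_general R r hr
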